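/- arXiv:2605.23799 — 2 statements merged into one kernel-verified Lean document; each statement's English description precedes it below -/
import Mathlib

section
/- Let (V, ∂, I) be a non-unital vertex algebra and P : V → V a Rota–Baxter operator of weight λ with P∘∂ = ∂∘P, i.e., I_{Pa,Pb}(μ) = P(I_{Pa,b}(μ) + I_{a,Pb}(μ) + λ I_{a,b}(μ)) for all a,b. Define I^⋆_{a,b}(μ) := I_{a,Pb}(μ) + I_{Pa,b}(μ) + λ I_{a,b}(μ). Then the deformed bracket satisfies the Jacobi identity: I^⋆_{a,I^⋆_{b,c}(μ)}(ν) − (−1)^{ε(a)ε(b)} I^⋆_{b,I^⋆_{a,c}(μ)}(ν) = I^⋆_{I^⋆_{a,b}(μ),c}(ν+μ) for all a,b,c ∈ V. -/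
open Finsupp

section VA

variable {F : Type*} [Field F] [CharZero F]
variable {V : Type*} [AddCommGroup V] [Module F V]

/-- `V[μ]`, polynomials in a formal variable μ with coefficients in `V`,
encoded as finitely supported functions `ℕ →₀ V`. -/
abbrev Pol (V : Type*) [AddCommGroup V] := ℕ →₀ V

/-- `V[μ,ν]`: the outer index is the μ-degree, the inner the ν-degree. -/
abbrev Pol2 (V : Type*) [AddCommGroup V] := ℕ →₀ (ℕ →₀ V)

/-- Multiplication by the formal variable μ on `V[μ]`. -/
noncomputable def polX (p : Pol V) : Pol V := p.sum fun n v => Finsupp.single (n + 1) v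

/-- Coefficient-wise application of a linear map to `V[μ]`. -/
noncomputable def cw (P : V →ₗ[F] V) (p : Pol V) : Pol V :=
  Finsupp.mapRange P P.map_zero p

/-- Substitution of `−μ−∂` for μ in `p ∈ V[μ]`, with `∂` acting on coefficients:
`μ^n ↦ (−μ−∂)^n = Σ_k (−1)^n C(n,k) μ^{n−k} ∂^k`. -/
noncomputable def negSubst (D : V →ₗ[F] V) (p : Pol V) : Pol V :=
  p.sum fun n v => ∑ k ∈ Finset.range (n + 1),
    Finsupp.single (n - k) ((((-1 : F) ^ n * (n.choose k : F)) • ((D ^ k) v)))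

/-- `I_{a, p(μ)}(ν) ∈ V[μ,ν]`: extend the bracket coefficient-wise in the
second argument. -/
noncomputable def extL (I : V → V → Pol V) (a : V) (p : Pol V) : Pol2 V :=
  p.sum fun m v => Finsupp.single m (I a v)

/-- `I_{p(μ), c}(ν+μ) ∈ V[μ,ν]`: extend the bracket coefficient-wise in the
first argument and substitute `ν + μ` for ν using the binomial theorem. -/
noncomputable def extR (F : Type*) [Field F] [Module F V]
    (I : V → V → Pol V) (p : Pol V) (c : V) : Pol2 V :=
  p.sum fun m v => (I v c).sum fun j w =>
    ∑ i ∈ Finset.range (j + 1),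
      Finsupp.single (m + (j - i)) (Finsupp.single i (((j.choose i : F)) • w))

/-- The Koszul sign `(−1)^{ε(a)ε(b)}` as an element of `F`. -/
def sgn (F : Type*) [Field F] (ε : V → ZMod 2) (a b : V) : F :=
  if ε a * ε b = 1 then -1 else 1

section AuxRB
set_option linter.unusedSectionVars false
set_option linter.unusedVariables false

lemma extL_addG (f : V → V → Pol V) (a : V) (h0 : f a 0 = 0)
    (hadd : ∀ y z, f a (y + z) = f a y + f a z) (p q : Pol V) :
    extL f a (p + q) = extL f a p + extL f a q :=
  Finsupp.sum_add_index' (fun m => by rw [h0, Finsupp.single_zero])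
    (fun m y z => by rw [hadd, Finsupp.single_add])

lemma extL_smulG (f : V → V → Pol V) (a : V) (t : F) (h0 : f a 0 = 0)
    (hs : ∀ y, f a (t • y) = t • f a y) (p : Pol V) :
    extL f a (t • p) = t • extL f a p := by
  unfold extL
  rw [Finsupp.sum_smul_index' (fun m => by rw [h0, Finsupp.single_zero]), Finsupp.smul_sum]
  exact Finsupp.sum_congr fun m _ => by rw [hs, Finsupp.smul_single]

lemma extL_cw (L : V →ₗ[F] V →ₗ[F] Pol V) (a : V) (P : V →ₗ[F] V) (p : Pol V) :
    extL (fun x y => L x y) a (cw P p) = extL (fun x y => L x (P y)) a p := by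
  unfold extL cw
  exact Finsupp.sum_mapRange_index (fun m => by simp)

lemma inner_zero (m j : ℕ) :
    (∑ i ∈ Finset.range (j + 1),
      Finsupp.single (m + (j - i)) (Finsupp.single i (((j.choose i : F)) • (0 : V)))) = 0 := by
  simp

lemma inner_add (m j : ℕ) (w w' : V) :
    (∑ i ∈ Finset.range (j + 1),
      Finsupp.single (m + (j - i)) (Finsupp.single i (((j.choose i : F)) • (w + w')))) =
    (∑ i ∈ Finset.range (j + 1),
      Finsupp.single (m + (j - i)) (Finsupp.single i (((j.choose i : F)) • w))) +
    (∑ i ∈ Finset.range (j + 1),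
      Finsupp.single (m + (j - i)) (Finsupp.single i (((j.choose i : F)) • w'))) := by
  rw [← Finset.sum_add_distrib]
  exact Finset.sum_congr rfl fun i _ => by rw [smul_add, Finsupp.single_add, Finsupp.single_add]

lemma inner_smul (t : F) (m j : ℕ) (w : V) :
    (∑ i ∈ Finset.range (j + 1),
      Finsupp.single (m + (j - i)) (Finsupp.single i (((j.choose i : F)) • (t • w)))) =
    t • ∑ i ∈ Finset.range (j + 1),
      Finsupp.single (m + (j - i)) (Finsupp.single i (((j.choose i : F)) • w)) := by
  rw [Finset.smul_sum]
  exact Finset.sum_congr rfl fun i _ => by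
    rw [smul_comm, Finsupp.smul_single, Finsupp.smul_single]

lemma sumInner_add (m : ℕ) (q q' : Pol V) :
    ((q + q').sum fun j w => ∑ i ∈ Finset.range (j + 1),
      Finsupp.single (m + (j - i)) (Finsupp.single i (((j.choose i : F)) • w))) =
    (q.sum fun j w => ∑ i ∈ Finset.range (j + 1),
      Finsupp.single (m + (j - i)) (Finsupp.single i (((j.choose i : F)) • w))) +
    (q'.sum fun j w => ∑ i ∈ Finset.range (j + 1),
      Finsupp.single (m + (j - i)) (Finsupp.single i (((j.choose i : F)) • w))) :=
  Finsupp.sum_add_index' (fun j => inner_zero m j) (fun j => inner_add m j)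

lemma sumInner_smul (m : ℕ) (t : F) (q : Pol V) :
    ((t • q).sum fun j w => ∑ i ∈ Finset.range (j + 1),
      Finsupp.single (m + (j - i)) (Finsupp.single i (((j.choose i : F)) • w))) =
    t • (q.sum fun j w => ∑ i ∈ Finset.range (j + 1),
      Finsupp.single (m + (j - i)) (Finsupp.single i (((j.choose i : F)) • w))) := by
  rw [Finsupp.sum_smul_index' (fun j => inner_zero m j), Finsupp.smul_sum]
  exact Finsupp.sum_congr fun j _ => inner_smul t m j _

lemma extR_addG (f : V → V → Pol V) (c : V) (h0 : f 0 c = 0)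
    (hadd : ∀ y z, f (y + z) c = f y c + f z c) (p q : Pol V) :
    extR F f (p + q) c = extR F f p c + extR F f q c :=
  Finsupp.sum_add_index' (fun m => by rw [h0, Finsupp.sum_zero_index])
    (fun m y z => by rw [hadd]; exact sumInner_add m _ _)

lemma extR_smulG (f : V → V → Pol V) (c : V) (t : F) (h0 : f 0 c = 0)
    (hs : ∀ y, f (t • y) c = t • f y c) (p : Pol V) :
    extR F f (t • p) c = t • extR F f p c := by
  unfold extR
  rw [Finsupp.sum_smul_index' (fun m => by rw [h0, Finsupp.sum_zero_index]), Finsupp.smul_sum]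
  exact Finsupp.sum_congr fun m _ => by rw [hs]; exact sumInner_smul m t _

lemma extR_cw (L : V →ₗ[F] V →ₗ[F] Pol V) (c : V) (P : V →ₗ[F] V) (p : Pol V) :
    extR F (fun x y => L x y) (cw P p) c = extR F (fun x y => L (P x) y) p c := by
  unfold extR cw
  exact Finsupp.sum_mapRange_index (fun m => by simp)

end AuxRB

theorem deformed_bracket_jacobi
    (D : V →ₗ[F] V) (I : V →ₗ[F] V →ₗ[F] Pol V) (ε : V → ZMod 2)
    (hsq1 : ∀ a b : V, I (D a) b = - polX (I a b))
    (hsq2 : ∀ a b : V, I a (D b) = cw D (I a b) + polX (I a b))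
    (hsk : ∀ a b : V, I b a = sgn F ε a b • negSubst D (I a b))
    (hjac : ∀ a b c : V, extL (fun x y => I x y) a (I b c)
        - sgn F ε a b • extL (fun x y => I x y) b (I a c)
        = extR F (fun x y => I x y) (I a b) c)
    (P : V →ₗ[F] V) (hPD : P ∘ₗ D = D ∘ₗ P) (lam : F)
    (hPeven : ∀ a : V, ε (P a) = ε a)
    (hRB : ∀ a b : V, I (P a) (P b)
        = cw P (I (P a) b + I a (P b) + lam • I a b))
    (Istar : V → V → Pol V)
    (hIs : ∀ a b : V, Istar a b = I a (P b) + I (P a) b + lam • I a b) :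
    ∀ a b c : V, extL Istar a (Istar b c)
        - sgn F ε a b • extL Istar b (Istar a c)
        = extR F Istar (Istar a b) c := by
  intro a b c
  -- cw P (Istar x y) = I (P x) (P y)
  have hcw : ∀ x y : V, cw P (Istar x y) = I (P x) (P y) := by
    intro x y
    rw [hIs, hRB]
    congr 1
    abel
  -- split the deformed bracket inside extL
  have hLstar : ∀ (x : V) (p : Pol V), extL Istar x p
      = extL (fun x y => I x (P y)) x p
        + extL (fun x y => I x y) (P x) p
        + lam • extL (fun x y => I x y) x p := by
    intro x p
    unfold extL
    rw [Finsupp.smul_sum, ← Finsupp.sum_add, ← Finsupp.sum_add]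
    exact Finsupp.sum_congr fun m _ => by
      rw [hIs, Finsupp.single_add, Finsupp.single_add, Finsupp.smul_single]
  -- split the deformed bracket inside extR
  have hRstar : ∀ (p : Pol V) (z : V), extR F Istar p z
      = extR F (fun x y => I x y) p (P z)
        + extR F (fun x y => I (P x) y) p z
        + lam • extR F (fun x y => I x y) p z := by
    intro p z
    unfold extR
    rw [Finsupp.smul_sum, ← Finsupp.sum_add, ← Finsupp.sum_add]
    exact Finsupp.sum_congr fun m _ => by
      rw [hIs, sumInner_add, sumInner_add, sumInner_smul]
  -- expansion of extL over a three-term sum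
  have hexpL : ∀ (x : V) (q1 q2 q3 : Pol V),
      extL (fun x y => I x y) x (q1 + q2 + lam • q3)
        = extL (fun x y => I x y) x q1 + extL (fun x y => I x y) x q2
          + lam • extL (fun x y => I x y) x q3 := by
    intro x q1 q2 q3
    rw [extL_addG _ x (by simp) (by intro y z; simp),
      extL_addG _ x (by simp) (by intro y z; simp),
      extL_smulG _ x lam (by simp) (by intro y; simp)]
  have hexpR : ∀ (z : V) (q1 q2 q3 : Pol V),
      extR F (fun x y => I x y) (q1 + q2 + lam • q3) z
        = extR F (fun x y => I x y) q1 z + extR F (fun x y => I x y) q2 z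
          + lam • extR F (fun x y => I x y) q3 z := by
    intro z q1 q2 q3
    rw [extR_addG _ z (by simp) (by intro y w; simp),
      extR_addG _ z (by simp) (by intro y w; simp),
      extR_smulG _ z lam (by simp) (by intro y; simp)]
  -- sign lemmas
  have hs1 : sgn F ε a (P b) = sgn F ε a b := by simp [sgn, hPeven]
  have hs2 : sgn F ε (P a) b = sgn F ε a b := by simp [sgn, hPeven]
  have hs3 : sgn F ε (P a) (P b) = sgn F ε a b := by simp [sgn, hPeven]
  -- Jacobi instances
  have J1 := hjac a (P b) (P c); rw [hs1] at J1
  have J2 := hjac (P a) b (P c); rw [hs2] at J2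
  have J3 := hjac a b (P c)
  have J4 := hjac (P a) (P b) c; rw [hs3] at J4
  have J5 := hjac a (P b) c; rw [hs1] at J5
  have J6 := hjac (P a) b c; rw [hs2] at J6
  have J7 := hjac a b c
  rw [hLstar a (Istar b c), hLstar b (Istar a c), hRstar (Istar a b) c,
    ← extL_cw I a P (Istar b c), ← extL_cw I b P (Istar a c),
    ← extR_cw I c P (Istar a b),
    hcw b c, hcw a c, hcw a b,
    hIs b c, hIs a c, hIs a b,
    hexpL (P a), hexpL a, hexpL (P b), hexpL b,
    hexpR (P c), hexpR c,
    ← J1, ← J2, ← J3, ← J4, ← J5, ← J6, ← J7]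
  module

end VA
end

section
/- Let (V, ∂, I) be a non-unital vertex algebra and P a Rota–Baxter operator of weight λ commuting with ∂. Then (V, ∂, I^⋆) with I^⋆_{a,b}(μ) := I_{a,Pb}(μ) + I_{Pa,b}(μ) + λ I_{a,b}(μ) is itself a non-unital vertex algebra, and P : (V, I^⋆) → (V, I) is a homomorphism of non-unital vertex algebras, i.e., I_{Pa,Pb}(μ) = P(I^⋆_{a,b}(μ)) and P∘∂ = ∂∘P. -/
set_option linter.unusedSectionVars false

open Finsupp

section VA

variable {F : Type*} [Field F] [CharZero F]
variable {V : Type*} [AddCommGroup V] [Module F V]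

/-! ### Auxiliary lemmas -/

lemma polX_def (p : Pol V) : polX p = Finsupp.mapDomain (· + 1) p := rfl

lemma polX_add (p q : Pol V) : polX (p + q) = polX p + polX q := by
  simp [polX_def, Finsupp.mapDomain_add]

lemma polX_smul (r : F) (p : Pol V) : polX (r • p) = r • polX p := by
  simp [polX_def, Finsupp.mapDomain_smul]

lemma cw_apply' (P : V →ₗ[F] V) (p : Pol V) (n : ℕ) : cw P p n = P (p n) :=
  Finsupp.mapRange_apply

lemma cw_add (P : V →ₗ[F] V) (p q : Pol V) : cw P (p + q) = cw P p + cw P q := by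
  ext n; simp [cw_apply']

lemma cw_smul (P : V →ₗ[F] V) (r : F) (p : Pol V) : cw P (r • p) = r • cw P p := by
  ext n; simp [cw_apply']

lemma negSubst_add (D : V →ₗ[F] V) (p q : Pol V) :
    negSubst D (p + q) = negSubst D p + negSubst D q := by
  unfold negSubst
  refine Finsupp.sum_add_index' (fun n => by simp) (fun n v w => ?_)
  simp [map_add, smul_add, Finsupp.single_add, Finset.sum_add_distrib]

lemma negSubst_smul (D : V →ₗ[F] V) (r : F) (p : Pol V) :
    negSubst D (r • p) = r • negSubst D p := by
  unfold negSubst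
  rw [Finsupp.sum_smul_index' (fun n => by simp), Finsupp.smul_sum]
  refine Finsupp.sum_congr fun n _ => ?_
  rw [Finset.smul_sum]
  refine Finset.sum_congr rfl fun k _ => ?_
  rw [map_smul, smul_comm, Finsupp.smul_single]

/-- `extL` with a fixed linear map on coefficients, as a linear map. -/
noncomputable def eL (L : V →ₗ[F] Pol V) : Pol V →ₗ[F] Pol2 V :=
  Finsupp.lsum F fun m => (Finsupp.lsingle m).comp L

lemma eL_apply (L : V →ₗ[F] Pol V) (p : Pol V) :
    eL L p = p.sum fun m v => Finsupp.single m (L v) := by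
  rw [eL, Finsupp.lsum_apply]
  rfl

lemma extL_eq (J : V → V → Pol V) (a : V) (L : V →ₗ[F] Pol V)
    (h : ∀ v, J a v = L v) (p : Pol V) : extL J a p = eL L p := by
  rw [eL_apply]
  exact Finsupp.sum_congr fun m _ => by rw [h]

lemma eL_add (L₁ L₂ : V →ₗ[F] Pol V) (p : Pol V) :
    eL (L₁ + L₂) p = eL L₁ p + eL L₂ p := by
  rw [eL_apply, eL_apply, eL_apply, Finsupp.sum, Finsupp.sum, Finsupp.sum,
    ← Finset.sum_add_distrib]
  exact Finset.sum_congr rfl fun m _ => by simp [Finsupp.single_add]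

lemma eL_smul (r : F) (L : V →ₗ[F] Pol V) (p : Pol V) :
    eL (r • L) p = r • eL L p := by
  rw [eL_apply, eL_apply, Finsupp.smul_sum]
  exact Finsupp.sum_congr fun m _ => by simp

lemma eL_comp (L : V →ₗ[F] Pol V) (P : V →ₗ[F] V) (p : Pol V) :
    eL (L ∘ₗ P) p = eL L (cw P p) := by
  rw [eL_apply, eL_apply, cw, Finsupp.sum_mapRange_index (fun m => by simp)]
  rfl

/-- The inner operation of `extR`, as a linear map. -/
noncomputable def phiR (m : ℕ) : Pol V →ₗ[F] Pol2 V :=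
  Finsupp.lsum F fun j => ∑ i ∈ Finset.range (j + 1),
    (Finsupp.lsingle (m + (j - i))).comp
      ((Finsupp.lsingle i).comp ((j.choose i : F) • (LinearMap.id (R := F) (M := V))))

lemma phiR_apply (m : ℕ) (q : Pol V) :
    phiR (F := F) m q = q.sum fun j w => ∑ i ∈ Finset.range (j + 1),
      Finsupp.single (m + (j - i)) (Finsupp.single i ((j.choose i : F) • w)) := by
  rw [phiR, Finsupp.lsum_apply]
  exact Finsupp.sum_congr fun j _ => by simp [LinearMap.sum_apply]

/-- `extR` with a fixed linear map on coefficients, as a linear map. -/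
noncomputable def eR (M : V →ₗ[F] Pol V) : Pol V →ₗ[F] Pol2 V :=
  Finsupp.lsum F fun m => (phiR m).comp M

lemma eR_apply (M : V →ₗ[F] Pol V) (p : Pol V) :
    eR M p = p.sum fun m v => phiR (F := F) m (M v) := by
  rw [eR, Finsupp.lsum_apply]
  rfl

lemma extR_eq (J : V → V → Pol V) (c : V) (M : V →ₗ[F] Pol V)
    (h : ∀ v, J v c = M v) (p : Pol V) : extR F J p c = eR M p := by
  rw [eR_apply]
  exact Finsupp.sum_congr fun m _ => by rw [phiR_apply, ← h]

lemma eR_add (M₁ M₂ : V →ₗ[F] Pol V) (p : Pol V) :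
    eR (M₁ + M₂) p = eR M₁ p + eR M₂ p := by
  rw [eR_apply, eR_apply, eR_apply, Finsupp.sum, Finsupp.sum, Finsupp.sum,
    ← Finset.sum_add_distrib]
  exact Finset.sum_congr rfl fun m _ => by simp

lemma eR_smul (r : F) (M : V →ₗ[F] Pol V) (p : Pol V) :
    eR (r • M) p = r • eR M p := by
  rw [eR_apply, eR_apply, Finsupp.smul_sum]
  exact Finsupp.sum_congr fun m _ => by simp

lemma eR_comp (M : V →ₗ[F] Pol V) (P : V →ₗ[F] V) (p : Pol V) :
    eR (M ∘ₗ P) p = eR M (cw P p) := by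
  rw [eR_apply, eR_apply, cw, Finsupp.sum_mapRange_index (fun m => by simp)]
  rfl

theorem deformed_bracket_is_vertex_algebra_and_P_is_hom
    (D : V →ₗ[F] V) (I : V →ₗ[F] V →ₗ[F] Pol V) (ε : V → ZMod 2)
    (hsq1 : ∀ a b : V, I (D a) b = - polX (I a b))
    (hsq2 : ∀ a b : V, I a (D b) = cw D (I a b) + polX (I a b))
    (hsk : ∀ a b : V, I b a = sgn F ε a b • negSubst D (I a b))
    (hjac : ∀ a b c : V, extL (fun x y => I x y) a (I b c)
        - sgn F ε a b • extL (fun x y => I x y) b (I a c)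
        = extR F (fun x y => I x y) (I a b) c)
    (P : V →ₗ[F] V) (hPD : P ∘ₗ D = D ∘ₗ P) (lam : F)
    (hPeven : ∀ a : V, ε (P a) = ε a)
    (hRB : ∀ a b : V, I (P a) (P b)
        = cw P (I (P a) b + I a (P b) + lam • I a b))
    (Istar : V → V → Pol V)
    (hIs : ∀ a b : V, Istar a b = I a (P b) + I (P a) b + lam • I a b) :
    (∀ a b : V, Istar (D a) b = - polX (Istar a b)) ∧
    (∀ a b : V, Istar a (D b) = cw D (Istar a b) + polX (Istar a b)) ∧
    (∀ a b : V, Istar b a = sgn F ε a b • negSubst D (Istar a b)) ∧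
    (∀ a b c : V, extL Istar a (Istar b c)
        - sgn F ε a b • extL Istar b (Istar a c)
        = extR F Istar (Istar a b) c) ∧
    (∀ a b : V, I (P a) (P b) = cw P (Istar a b)) ∧
    P ∘ₗ D = D ∘ₗ P := by
  have hPDv : ∀ v : V, P (D v) = D (P v) := fun v => LinearMap.congr_fun hPD v
  have hs1 : ∀ x y : V, sgn F ε (P x) y = sgn F ε x y := fun x y => by
    simp [sgn, hPeven]
  have hs2 : ∀ x y : V, sgn F ε x (P y) = sgn F ε x y := fun x y => by
    simp [sgn, hPeven]
  have key : ∀ x y : V, cw P (I x (P y) + I (P x) y + lam • I x y) = I (P x) (P y) := by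
    intro x y
    rw [hRB x y]
    congr 1
    module
  refine ⟨?_, ?_, ?_, ?_, ?_, hPD⟩
  · intro a b
    rw [hIs, hIs, hPDv, hsq1, hsq1, hsq1, polX_add, polX_add, polX_smul]
    module
  · intro a b
    rw [hIs, hIs, hPDv, hsq2, hsq2, hsq2, cw_add, cw_add, cw_smul,
      polX_add, polX_add, polX_smul]
    module
  · intro a b
    rw [hIs b a, hIs a b, hsk (P a) b, hsk a (P b), hsk a b, hs1, hs2,
      negSubst_add, negSubst_add, negSubst_smul]
    module
  · intro a b c
    have jac : ∀ x y z : V, eR (I.flip z) (I x y)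
        = eL (I x) (I y z) - sgn F ε x y • eL (I y) (I x z) := by
      intro x y z
      rw [← extR_eq (fun u v => I u v) z (I.flip z) (fun v => rfl),
        ← extL_eq (fun u v => I u v) x (I x) (fun v => rfl),
        ← extL_eq (fun u v => I u v) y (I y) (fun v => rfl)]
      exact (hjac x y z).symm
    have expandL : ∀ (x : V) (p : Pol V),
        extL Istar x p = eL (I x) (cw P p) + eL (I (P x)) p + lam • eL (I x) p := by
      intro x p
      rw [extL_eq Istar x ((I x ∘ₗ P) + I (P x) + lam • I x)
        (fun v => by simp [hIs]), eL_add, eL_add, eL_smul, eL_comp]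
    have hcwbc : cw P (Istar b c) = I (P b) (P c) := by rw [hIs]; exact key b c
    have hcwac : cw P (Istar a c) = I (P a) (P c) := by rw [hIs]; exact key a c
    have hcwab : cw P (Istar a b) = I (P a) (P b) := by rw [hIs]; exact key a b
    rw [expandL a (Istar b c), expandL b (Istar a c), hcwbc, hcwac,
      extR_eq Istar c (I.flip (P c) + (I.flip c ∘ₗ P) + lam • I.flip c)
        (fun v => by simp [hIs]),
      eR_add, eR_add, eR_smul, eR_comp, hcwab]
    simp only [hIs a b, hIs b c, hIs a c, map_add, map_smul]
    rw [jac a (P b) (P c), jac (P a) b (P c), jac a b (P c), jac (P a) (P b) c,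
      jac a (P b) c, jac (P a) b c, jac a b c]
    simp only [hs1, hs2]
    module
  · intro a b
    rw [hRB, hIs]
    congr 1
    module

end VA
end
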